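/- arXiv:1309.4718 — 7 statements merged into one kernel-verified Lean document; each statement's English description precedes it below -/
import Mathlib

section
/- Let Δ ≥ 1 and p be natural numbers, and let 𝒯 be a finite family of finite sets each of cardinality at most Δ. If the union of the members of 𝒯 has at least p elements, then there exists a subfamily 𝒯' ⊆ 𝒯 whose union has at least p and at most p + Δ − 1 elements. -/
/-! Discard sets one at a time while the union still has at least `p + Δ` elements: each removal
uncovers at most `Δ` elements, so at least `p` stay covered, and the process must stop at a union
of size between `p` and `p + Δ - 1`. -/

theorem Finset.card_biUnion_le_card_biUnion_erase_add {ι α : Type*} [DecidableEq ι]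
    [DecidableEq α] (s : Finset ι) (t : ι → Finset α) (i : ι) :
    (s.biUnion t).card ≤ ((s.erase i).biUnion t).card + (t i).card :=
  calc (s.biUnion t).card
      ≤ ((insert i (s.erase i)).biUnion t).card :=
        card_le_card (biUnion_subset_biUnion_of_subset_left t (insert_erase_subset i s))
    _ = (t i ∪ (s.erase i).biUnion t).card := by rw [biUnion_insert]
    _ ≤ ((s.erase i).biUnion t).card + (t i).card := by
        rw [add_comm]; exact card_union_le _ _

theorem partial_cover_trim_general {α : Type*} [DecidableEq α] (Δ p : ℕ)
    (𝒯 : Finset (Finset α)) (hcard : ∀ S ∈ 𝒯, S.card ≤ Δ)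
    (hcov : p ≤ (𝒯.biUnion id).card) :
    ∃ 𝒯' ⊆ 𝒯, p ≤ (𝒯'.biUnion id).card ∧ (𝒯'.biUnion id).card ≤ p + Δ - 1 := by
  induction 𝒯 using Finset.strongInduction with
  | H 𝒯 ih =>
    by_cases hsmall : (𝒯.biUnion id).card ≤ p + Δ - 1
    · exact ⟨𝒯, subset_rfl, hcov, hsmall⟩
    obtain ⟨S, hS⟩ : 𝒯.Nonempty := by
      rw [Finset.nonempty_iff_ne_empty]
      rintro rfl
      simp at hsmall
    have hcov_erase : p ≤ ((𝒯.erase S).biUnion id).card := by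
      have hremove := 𝒯.card_biUnion_le_card_biUnion_erase_add id S
      have hS_card := hcard S hS
      rw [id] at hremove
      omega
    obtain ⟨𝒯', h𝒯', hp, hle⟩ := ih (𝒯.erase S) (Finset.erase_ssubset hS)
      (fun T hT => hcard T (Finset.mem_of_mem_erase hT)) hcov_erase
    exact ⟨𝒯', h𝒯'.trans (Finset.erase_subset S 𝒯), hp, hle⟩

/-- Any family of finite sets, each of cardinality at most `Δ`, whose union has at least `p`
elements, contains a subfamily whose union has at least `p` and at most `p + Δ - 1` elements. -/
theorem partial_cover_trim {α : Type*} [DecidableEq α] (Δ p : ℕ) (hΔ : 1 ≤ Δ)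
    (𝒯 : Finset (Finset α)) (hcard : ∀ S ∈ 𝒯, S.card ≤ Δ)
    (hcov : p ≤ (𝒯.biUnion id).card) :
    ∃ 𝒯' ⊆ 𝒯, p ≤ (𝒯'.biUnion id).card ∧ (𝒯'.biUnion id).card ≤ p + Δ - 1 :=
  partial_cover_trim_general Δ p 𝒯 hcard hcov
end

section
/- Let 𝒯 be a finite family of finite sets with |𝒯| = k ≥ 1, and let k'' be a natural number with k'' ≤ k. Then there exists a subfamily 𝒯'' ⊆ 𝒯 with |𝒯''| = k'' such that k · |⋃_{S ∈ 𝒯''} S| ≥ k'' · |⋃_{S ∈ 𝒯} S|, i.e., 𝒯'' covers at least a k''/k fraction of the elements covered by 𝒯. -/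
open Finset

private lemma sum_erase_cov {α : Type*} [DecidableEq α] (𝒯 : Finset (Finset α)) :
    (𝒯.card - 1) * (𝒯.biUnion id).card ≤ ∑ S ∈ 𝒯, ((𝒯.erase S).biUnion id).card := by
  have hcard : ∀ S ∈ 𝒯, ((𝒯.erase S).biUnion id).card
      = ∑ x ∈ 𝒯.biUnion id, if x ∈ (𝒯.erase S).biUnion id then 1 else 0 := by
    intro S hS
    rw [← Finset.card_filter]
    congr 1
    rw [Finset.filter_mem_eq_inter]
    exact (Finset.inter_eq_right.mpr
      (Finset.biUnion_subset_biUnion_of_subset_left _ (Finset.erase_subset _ _))).symm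
  rw [Finset.sum_congr rfl hcard, Finset.sum_comm]
  have hx : ∀ x ∈ 𝒯.biUnion id,
      𝒯.card - 1 ≤ ∑ S ∈ 𝒯, if x ∈ (𝒯.erase S).biUnion id then 1 else 0 := by
    intro x hx
    rw [← Finset.card_filter]
    have hbad : (𝒯.filter (fun S => ¬ x ∈ (𝒯.erase S).biUnion id)).card ≤ 1 := by
      rw [Finset.card_le_one]
      intro a ha b hb
      simp only [Finset.mem_filter] at ha hb
      obtain ⟨T, hT, hxT⟩ := Finset.mem_biUnion.mp hx
      by_contra hab
      rcases eq_or_ne a T with h1 | haT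
      · exact hb.2 (Finset.mem_biUnion.mpr ⟨T, Finset.mem_erase.mpr
          ⟨fun h => hab (h1.trans h), hT⟩, hxT⟩)
      · exact ha.2 (Finset.mem_biUnion.mpr ⟨T, Finset.mem_erase.mpr
          ⟨fun h => haT h.symm, hT⟩, hxT⟩)
    have := Finset.card_filter_add_card_filter_not
      (s := 𝒯) (p := fun S => x ∈ (𝒯.erase S).biUnion id)
    omega
  calc (𝒯.card - 1) * (𝒯.biUnion id).card
      = ∑ _x ∈ 𝒯.biUnion id, (𝒯.card - 1) := by rw [Finset.sum_const, smul_eq_mul, mul_comm]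
    _ ≤ _ := Finset.sum_le_sum hx

/-- From a family of `k ≥ 1` finite sets one can pick `k'' ≤ k` of them covering at least a
`k''/k` fraction of the elements covered by the whole family. -/
theorem best_subfamily_fraction {α : Type*} [DecidableEq α] (𝒯 : Finset (Finset α))
    (k k'' : ℕ) (hk : 𝒯.card = k) (hk1 : 1 ≤ k) (hk'' : k'' ≤ k) :
    ∃ 𝒯'' ⊆ 𝒯, 𝒯''.card = k'' ∧
      k * (𝒯''.biUnion id).card ≥ k'' * (𝒯.biUnion id).card := by
  induction k generalizing 𝒯 k'' with
  | zero => omega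
  | succ n ih =>
    rcases Nat.eq_zero_or_pos k'' with rfl | hk''pos
    · exact ⟨∅, Finset.empty_subset _, Finset.card_empty, by simp⟩
    rcases eq_or_lt_of_le hk'' with rfl | hlt
    · exact ⟨𝒯, subset_rfl, hk, le_rfl⟩
    have hn1 : 1 ≤ n := by omega
    have hne : 𝒯.Nonempty := Finset.card_pos.mp (by omega)
    obtain ⟨S, hS, hSle⟩ : ∃ S ∈ 𝒯,
        (𝒯.card - 1) * (𝒯.biUnion id).card ≤ 𝒯.card * ((𝒯.erase S).biUnion id).card := by
      apply Finset.exists_le_of_sum_le hne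
      rw [Finset.sum_const, smul_eq_mul, ← Finset.mul_sum]
      exact Nat.mul_le_mul_left _ (sum_erase_cov 𝒯)
    have hcardE : (𝒯.erase S).card = n := by rw [Finset.card_erase_of_mem hS, hk]; omega
    obtain ⟨𝒯'', hsub, hcard'', hcov⟩ := ih (𝒯.erase S) k'' hcardE hn1 (by omega)
    refine ⟨𝒯'', hsub.trans (Finset.erase_subset _ _), hcard'', ?_⟩
    have h0 : n + 1 - 1 = n := rfl
    rw [hk, h0] at hSle
    have h1 : (n + 1) * (n * (𝒯''.biUnion id).card)
        ≥ (n + 1) * (k'' * ((𝒯.erase S).biUnion id).card) := Nat.mul_le_mul_left _ hcov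
    have h2 : (n + 1) * (k'' * ((𝒯.erase S).biUnion id).card)
        ≥ k'' * (n * (𝒯.biUnion id).card) := by
      calc (n + 1) * (k'' * ((𝒯.erase S).biUnion id).card)
          = k'' * ((n + 1) * ((𝒯.erase S).biUnion id).card) := by ring
        _ ≥ k'' * (n * (𝒯.biUnion id).card) := Nat.mul_le_mul_left _ hSle
    have : n * (k'' * (𝒯.biUnion id).card) ≤ n * ((n + 1) * (𝒯''.biUnion id).card) := by
      calc n * (k'' * (𝒯.biUnion id).card) = k'' * (n * (𝒯.biUnion id).card) := by ring
        _ ≤ (n + 1) * (n * (𝒯''.biUnion id).card) := le_trans h2 h1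
        _ = n * ((n + 1) * (𝒯''.biUnion id).card) := by ring
    exact Nat.le_of_mul_le_mul_left this (by omega)
end

section
/- Let 𝒯₀ be a finite family of finite subsets of a type X, let C be a finite subset of X, let S_j ∈ 𝒯₀, and let S_i ∉ 𝒯₀ be a finite subset of X such that: (i) (S_i \ C) ∩ ⋃_{S ∈ 𝒯₀} S = ∅; (ii) |S_i \ C| ≥ |S_j \ C|; and (iii) C ∩ S_j ⊆ ⋃_{S ∈ 𝒯₀ \ {S_j}} S. Then |⋃_{S ∈ (𝒯₀ \ {S_j}) ∪ {S_i}} S| ≥ |⋃_{S ∈ 𝒯₀} S|. -/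
namespace Finset

variable {α : Type*} [DecidableEq α] {s t u : Finset α}

theorem card_union_le_card_union_of_card_sdiff_le (h : #(s \ u) ≤ #(t \ u)) :
    #(s ∪ u) ≤ #(t ∪ u) := by
  rw [← card_sdiff_add_card s u, ← card_sdiff_add_card t u]
  omega

theorem sdiff_subset_sdiff_of_inter_subset (h : t ∩ s ⊆ u) : s \ u ⊆ s \ t := fun x hx => by
  rw [mem_sdiff] at hx ⊢
  exact ⟨hx.1, fun hxt => hx.2 (h (mem_inter.2 ⟨hxt, hx.1⟩))⟩

end Finset

open Finset

theorem greedy_exchange_general {X : Type*} [DecidableEq X] (𝒯₀ : Finset (Finset X)) (C : Finset X)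
    (Sj Si : Finset X) (hSj : Sj ∈ 𝒯₀)
    (h1 : (Si \ C) ∩ 𝒯₀.biUnion id = ∅)
    (h2 : (Si \ C).card ≥ (Sj \ C).card)
    (h3 : C ∩ Sj ⊆ (𝒯₀.erase Sj).biUnion id) :
    ((insert Si (𝒯₀.erase Sj)).biUnion id).card ≥ (𝒯₀.biUnion id).card := by
  set U := (𝒯₀.erase Sj).biUnion id
  have hcover : 𝒯₀.biUnion id = Sj ∪ U := by
    conv_lhs => rw [← insert_erase hSj]
    exact biUnion_insert
  have hSi_fresh : Disjoint (Si \ C) U :=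
    (disjoint_iff_inter_eq_empty.2 h1).mono_right
      (biUnion_subset_biUnion_of_subset_left _ (erase_subset _ _))
  rw [ge_iff_le, hcover, biUnion_insert]
  apply card_union_le_card_union_of_card_sdiff_le
  calc #(Sj \ U) ≤ #(Sj \ C) := card_le_card (sdiff_subset_sdiff_of_inter_subset h3)
    _ ≤ #(Si \ C) := h2
    _ ≤ #(Si \ U) := card_le_card (subset_sdiff.2 ⟨sdiff_subset, hSi_fresh⟩)

/-- Greedy exchange step: if the greedily chosen set `Sᵢ` covers, outside the committed set `C`,
at least as many fresh elements as `Sⱼ ∈ 𝒯₀`, and no new element of `Sᵢ` is covered by `𝒯₀`,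
and the committed elements of `Sⱼ` are covered by `𝒯₀ \ {Sⱼ}`, then substituting `Sᵢ` for `Sⱼ`
in `𝒯₀` covers at least as many elements. -/
theorem greedy_exchange {X : Type*} [DecidableEq X] (𝒯₀ : Finset (Finset X)) (C : Finset X)
    (Sj Si : Finset X) (hSj : Sj ∈ 𝒯₀) (hSi : Si ∉ 𝒯₀)
    (h1 : (Si \ C) ∩ 𝒯₀.biUnion id = ∅)
    (h2 : (Si \ C).card ≥ (Sj \ C).card)
    (h3 : C ∩ Sj ⊆ (𝒯₀.erase Sj).biUnion id) :
    ((insert Si (𝒯₀.erase Sj)).biUnion id).card ≥ (𝒯₀.biUnion id).card :=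
  greedy_exchange_general 𝒯₀ C Sj Si hSj h1 h2 h3
end

section
/- Let ε and c be real numbers with 0 < ε < 1/e and c > 0, let n be a real number with n > 1 and c · Real.log n > 0, and let t ≥ 0 be a real number with t · (1 + ε·e) ≥ Real.log (n / (c · Real.log n)). Then (1/e − ε)^t · n ≤ c · Real.log n (real power). -/
/-- Bound from the proof of item 1 of Proposition 3: if
`t (1 + εe) ≥ ln (n / (c ln n))` then `(1/e - ε)^t · n ≤ c ln n`. -/
theorem rounds_until_log_residual (ε c : ℝ) (hε0 : 0 < ε) (hε1 : ε < 1 / Real.exp 1)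
    (hc : c > 0) (n : ℝ) (hn : n > 1) (hclog : c * Real.log n > 0)
    (t : ℝ) (ht0 : t ≥ 0) (ht : t * (1 + ε * Real.exp 1) ≥ Real.log (n / (c * Real.log n))) :
    (1 / Real.exp 1 - ε) ^ t * n ≤ c * Real.log n := by
  have he : (0:ℝ) < Real.exp 1 := Real.exp_pos 1
  have hb0 : (0:ℝ) < 1 / Real.exp 1 - ε := by linarith
  have hn0 : (0:ℝ) < n := by linarith
  -- b = (1 - ε e)/e
  have hεe : ε * Real.exp 1 < 1 := by have := (lt_div_iff₀ he).mp hε1; linarith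
  have h1 : (0:ℝ) < 1 - ε * Real.exp 1 := by linarith
  have hlogb : Real.log (1 / Real.exp 1 - ε) ≤ -(1 + ε * Real.exp 1) := by
    have hbeq : 1 / Real.exp 1 - ε = (1 - ε * Real.exp 1) / Real.exp 1 := by
      field_simp
    rw [hbeq, Real.log_div (by positivity) (ne_of_gt he), Real.log_exp]
    have := Real.log_le_sub_one_of_pos h1
    linarith
  have key : t * Real.log (1 / Real.exp 1 - ε) ≤ -Real.log (n / (c * Real.log n)) := by
    calc t * Real.log (1 / Real.exp 1 - ε) ≤ t * (-(1 + ε * Real.exp 1)) :=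
          mul_le_mul_of_nonneg_left hlogb ht0
      _ = -(t * (1 + ε * Real.exp 1)) := by ring
      _ ≤ -Real.log (n / (c * Real.log n)) := neg_le_neg ht
  have hrpow : (1 / Real.exp 1 - ε) ^ t ≤ c * Real.log n / n := by
    rw [← Real.exp_log hb0, ← Real.exp_log (x := c * Real.log n / n) (by positivity),
      ← Real.exp_mul]
    apply Real.exp_le_exp.mpr
    rw [Real.log_div (ne_of_gt hclog) (ne_of_gt hn0)]
    rw [Real.log_div (ne_of_gt hn0) (ne_of_gt hclog)] at key
    linarith
  calc (1 / Real.exp 1 - ε) ^ t * n ≤ (c * Real.log n / n) * n :=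
        mul_le_mul_of_nonneg_right hrpow (le_of_lt hn0)
    _ = c * Real.log n := by field_simp
end

section
/- Let 𝒮 be a finite family of finite subsets of a type X, let k ≥ 1 be a natural number, let μ be a real number with 0 ≤ μ ≤ 1, and let k' be a natural number with (k' : ℝ) ≤ μ·k. Define s = max{ |⋃_{S ∈ 𝒯} S| : 𝒯 ⊆ 𝒮, |𝒯| ≤ k } and suppose 𝒯₁ ⊆ 𝒮 satisfies |𝒯₁| ≤ k' and |⋃_{S ∈ 𝒯₁} S| ≥ μ·s. Define s' = max{ |(⋃_{S ∈ 𝒯} S) \ ⋃_{S ∈ 𝒯₁} S| : 𝒯 ⊆ 𝒮, |𝒯| ≤ k − k' } and suppose 𝒯₂ ⊆ 𝒮 satisfies |𝒯₂| ≤ k − k' and |(⋃_{S ∈ 𝒯₂} S) \ ⋃_{S ∈ 𝒯₁} S| ≥ (1 − 1/e)·s'. Then |⋃_{S ∈ 𝒯₁ ∪ 𝒯₂} S| ≥ ((1 − 1/e) − (1 − 2/e)·μ + (1 − 1/e)·μ²)·s, where e = Real.exp 1 and cardinalities are compared as real numbers. -/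
open Finset

lemma remove_one {X : Type*} [DecidableEq X] (C : Finset X) (𝒜 : Finset (Finset X))
    (h : 𝒜.Nonempty) :
    ∃ S ∈ 𝒜, (𝒜.card - 1) * ((𝒜.biUnion id) \ C).card
      ≤ 𝒜.card * (((𝒜.erase S).biUnion id) \ C).card := by
  classical
  set M : Finset X → Finset X := fun S => ((𝒜.biUnion id) \ C) \ ((𝒜.erase S).biUnion id) with hM
  have hdisj : ∀ S ∈ 𝒜, ∀ T ∈ 𝒜, S ≠ T → Disjoint (M S) (M T) := by
    intro S hS T hT hne
    rw [Finset.disjoint_left]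
    intro x hxS hxT
    simp only [hM, Finset.mem_sdiff, Finset.mem_biUnion, id] at hxS hxT
    obtain ⟨⟨⟨U, hU, hxU⟩, -⟩, hnS⟩ := hxS
    obtain ⟨-, hnT⟩ := hxT
    have hUS : U = S := by
      by_contra hc
      exact hnS ⟨U, Finset.mem_erase.2 ⟨hc, hU⟩, hxU⟩
    have hUT : U = T := by
      by_contra hc
      exact hnT ⟨U, Finset.mem_erase.2 ⟨hc, hU⟩, hxU⟩
    exact hne (hUS ▸ hUT)
  have hsum : ∑ S ∈ 𝒜, (M S).card ≤ ((𝒜.biUnion id) \ C).card := by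
    rw [← Finset.card_biUnion hdisj]
    apply Finset.card_le_card
    intro x hx
    obtain ⟨S, hS, hxS⟩ := Finset.mem_biUnion.1 hx
    exact (Finset.mem_sdiff.1 hxS).1
  obtain ⟨S, hS, hmin⟩ := 𝒜.exists_min_image (fun S => (M S).card) h
  refine ⟨S, hS, ?_⟩
  have hcard : 𝒜.card * (M S).card ≤ ∑ T ∈ 𝒜, (M T).card := by
    calc 𝒜.card * (M S).card = ∑ _T ∈ 𝒜, (M S).card := by
          rw [Finset.sum_const, smul_eq_mul]
      _ ≤ ∑ T ∈ 𝒜, (M T).card := Finset.sum_le_sum fun T hT => hmin T hT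
  have h2 : 𝒜.card * (M S).card ≤ ((𝒜.biUnion id) \ C).card := hcard.trans hsum
  have h1 : ((𝒜.biUnion id) \ C).card
      ≤ (((𝒜.erase S).biUnion id) \ C).card + (M S).card := by
    calc ((𝒜.biUnion id) \ C).card
        ≤ ((((𝒜.erase S).biUnion id) \ C) ∪ M S).card := by
          apply Finset.card_le_card
          intro x hx
          rcases Finset.mem_sdiff.1 hx with ⟨hx1, hx2⟩
          by_cases hc : x ∈ (𝒜.erase S).biUnion id
          · exact Finset.mem_union_left _ (Finset.mem_sdiff.2 ⟨hc, hx2⟩)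
          · exact Finset.mem_union_right _ (Finset.mem_sdiff.2 ⟨hx, hc⟩)
      _ ≤ _ := Finset.card_union_le _ _
  set m := 𝒜.card with hm
  have hm1 : 1 ≤ m := Finset.card_pos.2 h
  set gA := ((𝒜.biUnion id) \ C).card
  set ge := (((𝒜.erase S).biUnion id) \ C).card
  set mS := (M S).card
  have key : (m - 1) * gA + m * mS ≤ m * ge + m * mS := by
    have e1 : (m - 1) * gA + gA = m * gA := by
      rw [Nat.sub_one_mul, Nat.sub_add_cancel (Nat.le_mul_of_pos_left gA (by omega))]
    calc (m - 1) * gA + m * mS ≤ (m - 1) * gA + gA := Nat.add_le_add_left h2 _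
      _ = m * gA := e1
      _ ≤ m * (ge + mS) := Nat.mul_le_mul_left m h1
      _ = m * ge + m * mS := by ring
  exact Nat.le_of_add_le_add_right key

lemma shrink {X : Type*} [DecidableEq X] (C : Finset X) :
    ∀ (𝒜 : Finset (Finset X)) (t : ℕ), t ≤ 𝒜.card →
    ∃ ℬ, ℬ ⊆ 𝒜 ∧ ℬ.card = t ∧
      t * ((𝒜.biUnion id \ C).card) ≤ 𝒜.card * ((ℬ.biUnion id \ C).card) := by
  intro 𝒜
  induction 𝒜 using Finset.strongInduction with
  | _ 𝒜 ih =>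
    intro t ht
    rcases eq_or_lt_of_le ht with heq | hlt
    · exact ⟨𝒜, Finset.Subset.refl _, heq.symm, by rw [heq]⟩
    · have hne : 𝒜.Nonempty := Finset.card_pos.1 (by omega)
      obtain ⟨S, hS, hrem⟩ := remove_one C 𝒜 hne
      have hsub : 𝒜.erase S ⊂ 𝒜 := Finset.erase_ssubset hS
      have hcard : (𝒜.erase S).card = 𝒜.card - 1 := Finset.card_erase_of_mem hS
      have ht' : t ≤ (𝒜.erase S).card := by omega
      obtain ⟨ℬ, hB1, hB2, hB3⟩ := ih _ hsub t ht'
      refine ⟨ℬ, hB1.trans (Finset.erase_subset _ _), hB2, ?_⟩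
      rcases Nat.eq_zero_or_pos t with rfl | htpos
      · simp
      rw [hcard] at hB3
      set m := 𝒜.card
      set gA := ((𝒜.biUnion id \ C).card)
      set ge := (((𝒜.erase S).biUnion id \ C).card)
      set gB := ((ℬ.biUnion id \ C).card)
      have hm1 : t + 1 ≤ m := hlt
      have hmm : 0 < m - 1 := by omega
      have : (m - 1) * (t * gA) ≤ (m - 1) * (m * gB) := by
        calc (m - 1) * (t * gA) = t * ((m - 1) * gA) := by ring
          _ ≤ t * (m * ge) := Nat.mul_le_mul_left t hrem
          _ = m * (t * ge) := by ring
          _ ≤ m * ((m - 1) * gB) := Nat.mul_le_mul_left m hB3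
          _ = (m - 1) * (m * gB) := by ring
      exact Nat.le_of_mul_le_mul_left this hmm


set_option maxHeartbeats 1600000 in
/-- Combinatorial content of Proposition 4: a `μ`-fraction-good partial solution `𝒯₁` of at
most `k' ≤ μk` sets combined with a `(1 - 1/e)`-approximate solution `𝒯₂` of at most `k - k'`
sets on the residual instance covers at least
`((1 - 1/e) - (1 - 2/e)μ + (1 - 1/e)μ²)` times the optimal `k`-set coverage. -/
theorem combined_coverage {X : Type*} [DecidableEq X] (𝒮 : Finset (Finset X))
    (k k' : ℕ) (hk : 1 ≤ k) (μ : ℝ) (hμ0 : 0 ≤ μ) (hμ1 : μ ≤ 1)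
    (hk' : (k' : ℝ) ≤ μ * k)
    (𝒯₁ 𝒯₂ : Finset (Finset X)) (h1S : 𝒯₁ ⊆ 𝒮) (h1c : 𝒯₁.card ≤ k')
    (h2S : 𝒯₂ ⊆ 𝒮) (h2c : 𝒯₂.card ≤ k - k')
    (h1cov : ((𝒯₁.biUnion id).card : ℝ) ≥
      μ * (((𝒮.powerset.filter fun 𝒯 => 𝒯.card ≤ k).sup
        fun 𝒯 => (𝒯.biUnion id).card : ℕ) : ℝ))
    (h2cov : (((𝒯₂.biUnion id) \ (𝒯₁.biUnion id)).card : ℝ) ≥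
      (1 - 1 / Real.exp 1) * (((𝒮.powerset.filter fun 𝒯 => 𝒯.card ≤ k - k').sup
        fun 𝒯 => ((𝒯.biUnion id) \ (𝒯₁.biUnion id)).card : ℕ) : ℝ)) :
    (((𝒯₁ ∪ 𝒯₂).biUnion id).card : ℝ) ≥
      ((1 - 1 / Real.exp 1) - (1 - 2 / Real.exp 1) * μ + (1 - 1 / Real.exp 1) * μ ^ 2) *
        (((𝒮.powerset.filter fun 𝒯 => 𝒯.card ≤ k).sup
          fun 𝒯 => (𝒯.biUnion id).card : ℕ) : ℝ) := by
  classical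
  set C₁ := 𝒯₁.biUnion id with hC₁
  set s : ℕ := (𝒮.powerset.filter fun 𝒯 => 𝒯.card ≤ k).sup fun 𝒯 => (𝒯.biUnion id).card with hs
  set s' : ℕ := (𝒮.powerset.filter fun 𝒯 => 𝒯.card ≤ k - k').sup
      fun 𝒯 => ((𝒯.biUnion id) \ C₁).card with hs'
  -- k' ≤ k
  have hkR : (0:ℝ) ≤ (k:ℝ) := Nat.cast_nonneg _
  have hkk : k' ≤ k := by
    have h2 : μ * k ≤ (k:ℝ) := by nlinarith
    exact_mod_cast hk'.trans h2
  -- the filter set is nonempty, get an optimal 𝒯*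
  have hne : (𝒮.powerset.filter fun 𝒯 => 𝒯.card ≤ k).Nonempty :=
    ⟨∅, Finset.mem_filter.2 ⟨Finset.empty_mem_powerset _, by simp⟩⟩
  obtain ⟨𝒯s, hmem, hsup⟩ := Finset.exists_mem_eq_sup _ hne fun 𝒯 => (𝒯.biUnion id).card
  rw [Finset.mem_filter, Finset.mem_powerset] at hmem
  obtain ⟨hTsS, hTsk⟩ := hmem
  -- apply shrink
  set t := min (k - k') 𝒯s.card with hT
  obtain ⟨ℬ, hB1, hB2, hB3⟩ := shrink C₁ 𝒯s t (min_le_right _ _)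
  -- ℬ is feasible for s'
  have hmemB : ℬ ∈ 𝒮.powerset.filter (fun 𝒯 => 𝒯.card ≤ k - k') := by
    rw [Finset.mem_filter, Finset.mem_powerset]
    refine ⟨hB1.trans hTsS, ?_⟩
    rw [hB2]
    exact min_le_left _ _
  have hBs' : ((ℬ.biUnion id) \ C₁).card ≤ s' := by
    rw [hs']
    exact Finset.le_sup (f := fun 𝒯 => ((𝒯.biUnion id) \ C₁).card) hmemB
  set g := ((𝒯s.biUnion id) \ C₁).card with hg
  -- g ≥ s - c₁
  have hgs : s ≤ g + C₁.card := by
    calc s = (𝒯s.biUnion id).card := hsup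
      _ ≤ _ := Finset.card_le_card_sdiff_add_card
  -- key: (k:ℝ) * s' ≥ (k - k') * g
  have hkey : ((k : ℝ) - k') * g ≤ (k : ℝ) * s' := by
    rcases le_or_gt (k - k') 𝒯s.card with hcase | hcase
    · have ht' : t = k - k' := min_eq_left hcase
      -- (k-k') * g ≤ m * gB ≤ m * s' ≤ k * s'
      have h1 : (k - k') * g ≤ 𝒯s.card * s' :=
        (ht' ▸ hB3).trans (Nat.mul_le_mul_left _ hBs')
      have h2 : 𝒯s.card * s' ≤ k * s' := Nat.mul_le_mul_right _ hTsk
      have : (k - k') * g ≤ k * s' := h1.trans h2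
      calc ((k : ℝ) - k') * g = ((k - k' : ℕ) : ℝ) * g := by
            rw [Nat.cast_sub hkk]
        _ ≤ ((k * s' : ℕ) : ℝ) := by exact_mod_cast this
        _ = (k : ℝ) * s' := by push_cast; ring
    · have ht' : t = 𝒯s.card := min_eq_right hcase.le
      have hBeq : ℬ = 𝒯s := Finset.eq_of_subset_of_card_le hB1 (by rw [hB2, ht'])
      have hgs' : g ≤ s' := by rw [hg, ← hBeq]; exact hBs'
      have hg0 : (0:ℝ) ≤ g := Nat.cast_nonneg _
      have hk'0 : (0:ℝ) ≤ k' := Nat.cast_nonneg _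
      have : (g : ℝ) ≤ s' := by exact_mod_cast hgs'
      nlinarith [Nat.cast_nonneg (α := ℝ) s', (Nat.one_le_cast (α := ℝ)).2 hk]
  -- s' ≥ (1-μ) * g  ≥ (1-μ)(s - c₁)
  have hkpos : (0:ℝ) < k := by exact_mod_cast hk
  have hg0 : (0:ℝ) ≤ g := Nat.cast_nonneg _
  have hs'1 : (1 - μ) * g ≤ (s' : ℝ) := by
    have h1 : (1 - μ) * k * g ≤ ((k : ℝ) - k') * g := by nlinarith
    have := h1.trans hkey
    nlinarith
  have hs'2 : (1 - μ) * ((s : ℝ) - C₁.card) ≤ (s' : ℝ) := by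
    have hgs' : (s : ℝ) - C₁.card ≤ g := by
      have : (s : ℝ) ≤ g + C₁.card := by exact_mod_cast hgs
      linarith
    calc (1 - μ) * ((s : ℝ) - C₁.card) ≤ (1 - μ) * g :=
          mul_le_mul_of_nonneg_left hgs' (by linarith)
      _ ≤ (s' : ℝ) := hs'1
  -- combined coverage
  have hcomb : (((𝒯₁ ∪ 𝒯₂).biUnion id).card : ℝ)
      = ((𝒯₂.biUnion id) \ C₁).card + (C₁.card : ℝ) := by
    have : (𝒯₁ ∪ 𝒯₂).biUnion id = C₁ ∪ 𝒯₂.biUnion id := by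
      rw [hC₁]
      ext x
      simp only [Finset.mem_biUnion, Finset.mem_union, id]
      constructor
      · rintro ⟨S, hS | hS, hxS⟩
        · exact Or.inl ⟨S, hS, hxS⟩
        · exact Or.inr ⟨S, hS, hxS⟩
      · rintro (⟨S, hS, hxS⟩ | ⟨S, hS, hxS⟩)
        · exact ⟨S, Or.inl hS, hxS⟩
        · exact ⟨S, Or.inr hS, hxS⟩
    rw [this, Finset.union_comm, ← Finset.card_sdiff_add_card (𝒯₂.biUnion id) C₁]
    push_cast; ring
  -- final arithmetic
  have he : (0:ℝ) < 1 - 1 / Real.exp 1 := by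
    have h1 : (1:ℝ) < Real.exp 1 := by
      have := Real.exp_one_gt_d9
      linarith
    have : 1 / Real.exp 1 < 1 := by
      rw [div_lt_one (by positivity)]; exact h1
    linarith
  have he2 : 1 - 1 / Real.exp 1 ≤ 1 := by
    have : 0 < 1 / Real.exp 1 := by positivity
    linarith
  have hs0 : (0:ℝ) ≤ s := Nat.cast_nonneg _
  rw [hcomb]
  set c₁ := (C₁.card : ℝ)
  set c₂ := ((((𝒯₂.biUnion id) \ C₁).card : ℕ) : ℝ)
  set E := 1 - 1 / Real.exp 1 with hE
  have h2E : 1 - 2 / Real.exp 1 = 2 * E - 1 := by rw [hE]; ring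
  rw [h2E]
  -- c₂ ≥ E * s' ≥ E (1-μ)(s - c₁); c₁ ≥ μ s
  have step1 : E * ((1 - μ) * ((s:ℝ) - c₁)) ≤ c₂ := by
    calc E * ((1 - μ) * ((s:ℝ) - c₁)) ≤ E * s' := by
          apply mul_le_mul_of_nonneg_left hs'2 he.le
      _ ≤ c₂ := h2cov
  nlinarith [mul_nonneg (sub_nonneg.2 h1cov) (by nlinarith : (0:ℝ) ≤ 1 - E * (1 - μ))]
end

section
/- Let s, a, b, μ be real numbers with 0 ≤ μ ≤ 1, s ≥ 0, μ·s ≤ a ≤ s, and b ≥ (1 − 1/e)·(1 − μ)·(s − a), where e = Real.exp 1. Then a + b ≥ ((1 − 1/e) − (1 − 2/e)·μ + (1 − 1/e)·μ²)·s. -/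
/-!
Since `b ≥ c (1 - μ) (s - a)` with `c = 1 - 1/e`, the sum `a + b` is bounded below by a function of `a`
that is affine with slope `1 - c (1 - μ) ≥ 0`, so it is smallest at the least admissible value
`a = μ s`, where it equals `(μ + c (1 - μ)²) s`; expanding this coefficient gives the claim.
-/

theorem mul_le_add_of_le_mul_sub {c μ s a b : ℝ} (hc0 : 0 ≤ c) (hc1 : c ≤ 1) (hμ : 0 ≤ μ)
    (ha : μ * s ≤ a) (hb : c * (1 - μ) * (s - a) ≤ b) :
    (μ + c * (1 - μ) ^ 2) * s ≤ a + b := by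
  have hslope : 0 ≤ 1 - c * (1 - μ) := by nlinarith
  linear_combination hb + mul_nonneg hslope (sub_nonneg.2 ha)

theorem one_sub_inv_exp_one_mem_Icc : 1 - 1 / Real.exp 1 ∈ Set.Icc (0 : ℝ) 1 := by
  have hinv : 1 / Real.exp 1 ≤ 1 := (div_le_one (Real.exp_pos 1)).2 (Real.one_le_exp zero_le_one)
  constructor <;> linarith [one_div_pos.2 (Real.exp_pos 1)]

theorem final_ratio_ineq_general (s a b μ : ℝ) (hμ0 : 0 ≤ μ)
    (ha1 : μ * s ≤ a)
    (hb : b ≥ (1 - 1 / Real.exp 1) * (1 - μ) * (s - a)) :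
    a + b ≥ ((1 - 1 / Real.exp 1) - (1 - 2 / Real.exp 1) * μ + (1 - 1 / Real.exp 1) * μ ^ 2) * s := by
  obtain ⟨hc0, hc1⟩ := one_sub_inv_exp_one_mem_Icc
  have hcoeff : (1 - 1 / Real.exp 1) - (1 - 2 / Real.exp 1) * μ + (1 - 1 / Real.exp 1) * μ ^ 2
      = μ + (1 - 1 / Real.exp 1) * (1 - μ) ^ 2 := by ring
  rw [hcoeff]
  exact mul_le_add_of_le_mul_sub hc0 hc1 hμ0 ha1 hb

/-- Final chain of inequalities in the appendix proof of Proposition 4. -/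
theorem final_ratio_ineq (s a b μ : ℝ) (hμ0 : 0 ≤ μ) (hμ1 : μ ≤ 1) (hs : 0 ≤ s)
    (ha1 : μ * s ≤ a) (ha2 : a ≤ s)
    (hb : b ≥ (1 - 1 / Real.exp 1) * (1 - μ) * (s - a)) :
    a + b ≥ ((1 - 1 / Real.exp 1) - (1 - 2 / Real.exp 1) * μ + (1 - 1 / Real.exp 1) * μ ^ 2) * s :=
  final_ratio_ineq_general s a b μ hμ0 ha1 hb
end

section
/- Let φ be a finite multiset of clauses over a variable type V, where a clause is a pair (P, N) of finite sets of variables and an assignment a : V → Bool satisfies (P, N) iff some v ∈ P has a v = true or some v ∈ N has a v = false. For any variable x, let occ⁺(x) be the number of clauses (P, N) of φ with x ∈ P and occ⁻(x) the number with x ∈ N. Then there exists an assignment a setting at most one variable to true such that the number of clauses of φ satisfied by a is at least ⌈(occ⁺(x) + occ⁻(x)) / 2⌉. -/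
open scoped Classical

section

variable {V : Type*} (φ : Multiset (Finset V × Finset V)) (x : V) (a : V → Bool)

theorem card_filter_mem_fst_le_card_filter_satisfied (hx : a x = true) :
    (φ.filter fun c => x ∈ c.1).card ≤
      (φ.filter fun c => (∃ v ∈ c.1, a v = true) ∨ (∃ v ∈ c.2, a v = false)).card :=
  Multiset.card_le_card <| Multiset.monotone_filter_right φ fun _ hc => Or.inl ⟨x, hc, hx⟩

theorem card_filter_mem_snd_le_card_filter_satisfied (hx : a x = false) :
    (φ.filter fun c => x ∈ c.2).card ≤
      (φ.filter fun c => (∃ v ∈ c.1, a v = true) ∨ (∃ v ∈ c.2, a v = false)).card :=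
  Multiset.card_le_card <| Multiset.monotone_filter_right φ fun _ hc => Or.inr ⟨x, hc, hx⟩

end

/-- Any CNF formula admits an assignment setting at most one variable to true that satisfies
at least `⌈(occ⁺(x) + occ⁻(x)) / 2⌉` clauses, for any variable `x`. -/
theorem half_frequency_satisfiable {V : Type*} (φ : Multiset (Finset V × Finset V)) (x : V) :
    ∃ a : V → Bool, (∀ v w, a v = true → a w = true → v = w) ∧
      (φ.filter fun c => (∃ v ∈ c.1, a v = true) ∨ (∃ v ∈ c.2, a v = false)).card ≥
        ((φ.filter fun c => x ∈ c.1).card + (φ.filter fun c => x ∈ c.2).card + 1) / 2 := by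
  obtain h | h := le_total (φ.filter fun c => x ∈ c.1).card (φ.filter fun c => x ∈ c.2).card
  · refine ⟨fun _ => false, by simp, ?_⟩
    exact le_trans (by omega) (card_filter_mem_snd_le_card_filter_satisfied φ x _ rfl)
  · refine ⟨fun v => decide (v = x),
      fun v w hv hw => (of_decide_eq_true hv).trans (of_decide_eq_true hw).symm, ?_⟩
    exact le_trans (by omega) (card_filter_mem_fst_le_card_filter_satisfied φ x _ (decide_eq_true rfl))
end
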